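/- Let d ≥ 1 and N ≥ 0. Let F : {0,…,N} → real d×d matrices with det F(0) > 0, and for each k < N let ΔF(k) be a real d×d matrix with det ΔF(k) > 0 such that F(k+1) = ΔF(k) * F(k). Let J̄ : {0,…,N} → ℝ with J̄(k) > 0 for all k and J̄(0) = det F(0). Define recursively F̄(0) := F(0) and F̄(k+1) := (J̄(k+1) / (J̄(k) · det ΔF(k)))^(1/d) • (ΔF(k) * F̄(k)). Then for every k ≤ N: det F(k) > 0, F̄(k) = (J̄(k) / det F(k))^(1/d) • F(k), and det F̄(k) = J̄(k). That is, the incremental update algorithm reproduces, at every time step, the total assumed deformation gradient of the F̄ method. -/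
import Mathlib


/-- The incremental update algorithm
`F̄(0) := F(0)`, `F̄(k+1) := (J̄(k+1) / (J̄(k) · det ΔF(k)))^(1/d) • (ΔF(k) * F̄(k))`
reproduces, at every time step `k ≤ N`, the total assumed deformation gradient
`F̄(k) = (J̄(k) / det F(k))^(1/d) • F(k)` with `det F̄(k) = J̄(k)` and `det F(k) > 0`. -/
theorem incremental_Fbar_update (d N : ℕ) (hd : 1 ≤ d)
    (F ΔF Fbar : ℕ → Matrix (Fin d) (Fin d) ℝ) (Jbar : ℕ → ℝ)
    (hF0 : 0 < (F 0).det)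
    (hΔF : ∀ k < N, 0 < (ΔF k).det)
    (hFrec : ∀ k < N, F (k + 1) = ΔF k * F k)
    (hJpos : ∀ k ≤ N, 0 < Jbar k)
    (hJ0 : Jbar 0 = (F 0).det)
    (hFbar0 : Fbar 0 = F 0)
    (hFbarrec : ∀ k < N, Fbar (k + 1) =
      ((Jbar (k + 1) / (Jbar k * (ΔF k).det)) ^ ((1 : ℝ) / d)) • (ΔF k * Fbar k)) :
    ∀ k ≤ N, 0 < (F k).det ∧
      Fbar k = ((Jbar k / (F k).det) ^ ((1 : ℝ) / d)) • F k ∧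
      (Fbar k).det = Jbar k := by
  have hd0 : (d : ℝ) ≠ 0 := by positivity
  have key : ∀ x : ℝ, 0 < x → (x ^ ((1:ℝ)/d)) ^ d = x := by
    intro x hx
    rw [← Real.rpow_natCast (x ^ ((1:ℝ)/d)) d, ← Real.rpow_mul hx.le,
      one_div_mul_cancel hd0, Real.rpow_one]
  intro k hk
  induction k with
  | zero =>
    refine ⟨hF0, ?_, ?_⟩
    · rw [hFbar0, hJ0, div_self hF0.ne', Real.one_rpow, one_smul]
    · rw [hFbar0, hJ0]
  | succ n ih =>
    have hnN : n < N := hk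
    obtain ⟨hdet, hbar, hdbar⟩ := ih (le_of_lt hnN)
    have hΔ := hΔF n hnN
    have hJn := hJpos n hnN.le
    have hJn1 := hJpos (n+1) hk
    have hdet1 : 0 < (F (n+1)).det := by
      rw [hFrec n hnN, Matrix.det_mul]; exact mul_pos hΔ hdet
    have hbase1 : 0 < Jbar (n+1) / (Jbar n * (ΔF n).det) := by positivity
    have hbase2 : 0 < Jbar n / (F n).det := by positivity
    have heq : Fbar (n+1) = ((Jbar (n+1) / (F (n+1)).det) ^ ((1:ℝ)/d)) • F (n+1) := by
      rw [hFbarrec n hnN, hbar, Matrix.mul_smul, smul_smul,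
        ← Real.mul_rpow hbase1.le hbase2.le, hFrec n hnN, Matrix.det_mul]
      congr 2
      field_simp
    refine ⟨hdet1, heq, ?_⟩
    rw [heq, Matrix.det_smul, Fintype.card_fin, key _ (by positivity), div_mul_cancel₀ _ hdet1.ne']
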